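/- For all 2 ≤ i ≤ l and m1,n1,m2,n2 ∈ Z, [e_{1i}(m1,n1), e_{11}(m2,n2)] = −q^{n2 m1} e_{1i}(m1+m2, n1+n2). -/

import Mathlib

open MvPolynomial

/-- Index set `{2, …, l}` for the variables. -/
abbrev Idx (l : ℕ) := {i : ℕ // 2 ≤ i ∧ i ≤ l}

/-- The polynomial ring `V = ℂ[x_i(m,n) : 2 ≤ i ≤ l, (m,n) ∈ ℤ²]`. -/
abbrev V (l : ℕ) := MvPolynomial (Idx l × ℤ × ℤ) ℂ

/-- `e_{ij}(m1,n1) = Σ_{(m,n)} q^{m n1} x_i(m1+m, n1+n) ∂/∂x_j(m,n)`, for `2 ≤ i,j ≤ l`. -/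
noncomputable def eGen (l : ℕ) (q : ℂ) (i j : Idx l) (m1 n1 : ℤ) (p : V l) : V l :=
  ∑ᶠ mn : ℤ × ℤ,
    q ^ (mn.1 * n1) • (X (i, m1 + mn.1, n1 + mn.2) * pderiv (j, mn.1, mn.2) p)

/-- `e_{i1}(m,n)` = multiplication by the variable `x_i(m,n)`. -/
noncomputable def eLow (l : ℕ) (i : Idx l) (m n : ℤ) (p : V l) : V l :=
  X (i, m, n) * p

/-- `e_{11}(m1,n1) = μ δ_{(m1,n1),(0,0)} − Σ_{j=2}^l Σ_{(m,n)} q^{n m1} x_j(m1+m, n1+n) ∂/∂x_j(m,n)`. -/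
noncomputable def e11 (l : ℕ) (q μ : ℂ) (m1 n1 : ℤ) (p : V l) : V l :=
  (if (m1, n1) = ((0 : ℤ), (0 : ℤ)) then μ else 0) • p
  - ∑ᶠ j : Idx l, ∑ᶠ mn : ℤ × ℤ,
      q ^ (mn.2 * m1) • (X (j, m1 + mn.1, n1 + mn.2) * pderiv (j, mn.1, mn.2) p)

/-- `e_{1i}(m1,n1) = q^{−m1 n1} μ ∂/∂x_i(−m1,−n1)
  − Σ_{j=2}^l Σ_{(m,n),(m',n')} q^{n1 m' + n m1 + n m'}
      x_j(m1+m+m', n1+n+n') ∂/∂x_j(m,n) ∂/∂x_i(m',n')`, for `2 ≤ i ≤ l`. -/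
noncomputable def eUp (l : ℕ) (q μ : ℂ) (i : Idx l) (m1 n1 : ℤ) (p : V l) : V l :=
  q ^ (-(m1 * n1)) • μ • pderiv (i, -m1, -n1) p
  - ∑ᶠ j : Idx l, ∑ᶠ mm : (ℤ × ℤ) × (ℤ × ℤ),
      q ^ (n1 * mm.2.1 + mm.1.2 * m1 + mm.1.2 * mm.2.1) •
        (X (j, m1 + mm.1.1 + mm.2.1, n1 + mm.1.2 + mm.2.2) *
          pderiv (j, mm.1.1, mm.1.2) (pderiv (i, mm.2.1, mm.2.2) p))

/-- Degree operator `D1 = Σ_{i=2}^l Σ_{(m,n)} m · x_i(m,n) ∂/∂x_i(m,n)`. -/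
noncomputable def D1 (l : ℕ) (p : V l) : V l :=
  ∑ᶠ i : Idx l, ∑ᶠ mn : ℤ × ℤ,
    (mn.1 : ℂ) • (X (i, mn.1, mn.2) * pderiv (i, mn.1, mn.2) p)

/-- Degree operator `D2 = Σ_{i=2}^l Σ_{(m,n)} n · x_i(m,n) ∂/∂x_i(m,n)`. -/
noncomputable def D2 (l : ℕ) (p : V l) : V l :=
  ∑ᶠ i : Idx l, ∑ᶠ mn : ℤ × ℤ,
    (mn.2 : ℂ) • (X (i, mn.1, mn.2) * pderiv (i, mn.1, mn.2) p)

/-- Commutator `[A,B] = A∘B − B∘A` of operators on `V`. -/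
noncomputable def oComm {l : ℕ} (A B : V l → V l) : V l → V l := fun p => A (B p) - B (A p)

/-!
Let `E_{M,N}` (`shiftDerivation l q M N`) be the derivation of `V` with
`x_j(a,b) ↦ q^{bM} x_j(M+a, N+b)`. Then `e_{11}(m,n) = μ δ_{(m,n),(0,0)} − E_{m,n}`, and the
second-order part of `e_{1i}(m1,n1)` factors as `Σ_b q^{n1 b₁} E_{m1+b₁, n1+b₂} ∂/∂x_i(b)`
(`eUpSecondOrder`). Brackets of derivations are derivations, so they are computed on generators:
`[∂/∂x_i(b), E_{M,N}] = q^{(b₂−N)M} ∂/∂x_i(b₁−M, b₂−N)` and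
`[E_P, E_R] = (q^{R₂P₁} − q^{P₂R₁}) E_{P+R}`.
After the shift `b ↦ b + (m2,n2)` the terms produced by the first bracket cancel the `q^{P₂R₁}`
half of the second, and what is left is `−q^{n2 m1} e_{1i}(m1+m2, n1+n2)`.
-/

open Function

theorem Function.HasFiniteSupport.fun_comp_of_injective_of_map_zero {ι α M N : Type*} [Zero M]
    [Zero N] {g : α → M} (hg : g.HasFiniteSupport) {k : ι → α} (hk : Injective k)
    {F : ι → M → N} (hF : ∀ b, F b 0 = 0) : (fun b => F b (g (k b))).HasFiniteSupport :=
  (hg.comp_of_injective hk).subset fun b hb h0 => hb (by simp_all)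

namespace MvPolynomial

variable {R σ : Type*} [CommRing R]

theorem pderiv_pderiv_comm (u v : σ) (p : MvPolynomial σ R) :
    pderiv u (pderiv v p) = pderiv v (pderiv u p) := by
  classical
  have h : ⁅pderiv u, pderiv v⁆ = (0 : Derivation R (MvPolynomial σ R) (MvPolynomial σ R)) :=
    derivation_ext fun w => by
      rw [Derivation.commutator_apply, pderiv_X, pderiv_X, Pi.single_apply, Pi.single_apply]
      split_ifs <;> simp
  simpa [Derivation.commutator_apply, sub_eq_zero] using congr($h p)

theorem hasFiniteSupport_pderiv (p : MvPolynomial σ R) :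
    (fun v => pderiv v p).HasFiniteSupport :=
  p.vars.finite_toSet.subset fun _ hv => by_contra fun h => hv (pderiv_eq_zero_of_notMem_vars h)

theorem hasFiniteSupport_mul_pderiv (f : σ → MvPolynomial σ R) (p : MvPolynomial σ R) :
    (fun v => f v * pderiv v p).HasFiniteSupport :=
  (hasFiniteSupport_pderiv p).mul_right f

theorem hasFiniteSupport_pderiv_pderiv (p : MvPolynomial σ R) :
    (fun uv : σ × σ => pderiv uv.1 (pderiv uv.2 p)).HasFiniteSupport := by
  refine ((hasFiniteSupport_pderiv p).prod (hasFiniteSupport_pderiv p)).subset fun uv huv => ?_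
  refine ⟨fun h => huv ?_, fun h => huv ?_⟩
  · simp_all [pderiv_pderiv_comm uv.1]
  · simp_all

theorem hasFiniteSupport_smul_derivation_pderiv {ι : Type*} (c : ι → R)
    (D : ι → Derivation R (MvPolynomial σ R) (MvPolynomial σ R)) {k : ι → σ} (hk : Injective k)
    (p : MvPolynomial σ R) : (fun b => c b • D b (pderiv (k b) p)).HasFiniteSupport :=
  (hasFiniteSupport_pderiv p).fun_comp_of_injective_of_map_zero hk
    (F := fun b r => c b • D b r) fun _ => by simp

theorem derivation_eq_finsum_mul_pderiv (D : Derivation R (MvPolynomial σ R) (MvPolynomial σ R))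
    (p : MvPolynomial σ R) : D p = ∑ᶠ v, D (X v) * pderiv v p := by
  classical
  have hsupp : (Function.support fun v => D (X v) * pderiv v p) ⊆ p.vars := fun v hv => by
    by_contra h
    exact hv (by simp only [pderiv_eq_zero_of_notMem_vars h, mul_zero])
  rw [finsum_eq_sum_of_support_subset _ hsupp]
  have hsum : ∀ r, (∑ v ∈ p.vars, D (X v) • pderiv v) r = ∑ v ∈ p.vars, D (X v) * pderiv v r :=
    fun r => by
      rw [← Derivation.coeFnAddMonoidHom_apply, map_sum, Finset.sum_apply]
      rfl
  have hD : D p = (∑ v ∈ p.vars, D (X v) • pderiv v) p :=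
    derivation_eq_of_forall_mem_vars fun u hu => by
      rw [hsum, Finset.sum_eq_single u]
      · simp
      · intro v _ hvu
        simp [pderiv_X, hvu.symm]
      · exact fun h => absurd hu h
  rw [hD, hsum]

end MvPolynomial

section

variable {l : ℕ}

noncomputable def shiftDerivation (l : ℕ) (q : ℂ) (M N : ℤ) : Derivation ℂ (V l) (V l) :=
  mkDerivation ℂ fun v => q ^ (v.2.2 * M) • X (v.1, M + v.2.1, N + v.2.2)

theorem shiftDerivation_X (q : ℂ) (M N : ℤ) (j : Idx l) (a : ℤ × ℤ) :
    shiftDerivation l q M N (X (j, a)) = q ^ (a.2 * M) • X (j, M + a.1, N + a.2) :=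
  mkDerivation_X ℂ _ _

theorem e11_eq_smul_sub_shiftDerivation (q μ : ℂ) (m n : ℤ) (p : V l) :
    e11 l q μ m n p = (if (m, n) = ((0 : ℤ), (0 : ℤ)) then μ else 0) • p
      - shiftDerivation l q m n p := by
  rw [e11, derivation_eq_finsum_mul_pderiv (shiftDerivation l q m n),
    finsum_curry _ (hasFiniteSupport_mul_pderiv _ p)]
  simp only [shiftDerivation_X, smul_mul_assoc]

theorem lie_pderiv_shiftDerivation (q : ℂ) (M N : ℤ) (k : Idx l) (b : ℤ × ℤ) :
    ⁅(pderiv (k, b) : Derivation ℂ (V l) (V l)), shiftDerivation l q M N⁆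
      = q ^ ((b.2 - N) * M) • pderiv (k, b.1 - M, b.2 - N) := by
  classical
  refine derivation_ext fun ⟨j, a⟩ => ?_
  rw [Derivation.commutator_apply, Derivation.smul_apply, shiftDerivation_X, pderiv_X, pderiv_X,
    Derivation.map_smul, pderiv_X]
  simp only [Pi.single_apply, Prod.mk.injEq]
  have h0 : shiftDerivation l q M N (if j = k ∧ a = b then 1 else 0) = 0 := by
    split_ifs <;> simp
  rw [h0, sub_zero]
  by_cases h : j = k ∧ a = (b.1 - M, b.2 - N)
  · obtain ⟨rfl, rfl⟩ := h
    simp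
  · rw [if_neg h, if_neg, smul_zero, smul_zero]
    rintro ⟨hj, rfl⟩
    exact h ⟨hj, by simp⟩

theorem lie_shiftDerivation_shiftDerivation {q : ℂ} (hq : q ≠ 0) (P₁ P₂ R₁ R₂ : ℤ) :
    ⁅shiftDerivation l q P₁ P₂, shiftDerivation l q R₁ R₂⁆
      = (q ^ (R₂ * P₁) - q ^ (P₂ * R₁)) • shiftDerivation l q (P₁ + R₁) (P₂ + R₂) := by
  refine derivation_ext fun ⟨j, a⟩ => ?_
  rw [Derivation.commutator_apply, Derivation.smul_apply, shiftDerivation_X, shiftDerivation_X,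
    Derivation.map_smul, Derivation.map_smul, shiftDerivation_X, shiftDerivation_X,
    shiftDerivation_X, smul_smul, smul_smul, smul_smul, add_left_comm R₁ P₁, add_left_comm R₂ P₂,
    ← add_assoc P₁, ← add_assoc P₂, ← sub_smul]
  congr 1
  simp only [add_mul, mul_add, zpow_add₀ hq]
  ring

noncomputable def eUpSecondOrder (q : ℂ) (i : Idx l) (m1 n1 : ℤ) : V l →ₗ[ℂ] V l where
  toFun p := ∑ᶠ b : ℤ × ℤ,
    q ^ (n1 * b.1) • shiftDerivation l q (m1 + b.1) (n1 + b.2) (pderiv (i, b) p)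
  map_add' p r := by
    simp only [map_add, smul_add]
    exact finsum_add_distrib
      (hasFiniteSupport_smul_derivation_pderiv _ _ (Prod.mk_right_injective i) p)
      (hasFiniteSupport_smul_derivation_pderiv _ _ (Prod.mk_right_injective i) r)
  map_smul' c p := by
    simp only [Derivation.map_smul, smul_comm _ c, RingHom.id_apply]
    exact (smul_finsum' c
      (hasFiniteSupport_smul_derivation_pderiv _ _ (Prod.mk_right_injective i) p)).symm

theorem eUpSecondOrder_apply (q : ℂ) (i : Idx l) (m1 n1 : ℤ) (p : V l) :
    eUpSecondOrder q i m1 n1 p = ∑ᶠ b : ℤ × ℤ,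
      q ^ (n1 * b.1) • shiftDerivation l q (m1 + b.1) (n1 + b.2) (pderiv (i, b) p) :=
  rfl

theorem eUp_eq_sub_eUpSecondOrder {q : ℂ} (hq : q ≠ 0) (μ : ℂ) (i : Idx l) (m1 n1 : ℤ)
    (p : V l) :
    eUp l q μ i m1 n1 p
      = q ^ (-(m1 * n1)) • μ • pderiv (i, -m1, -n1) p - eUpSecondOrder q i m1 n1 p := by
  let F : Idx l × (ℤ × ℤ) × (ℤ × ℤ) → V l := fun x =>
    q ^ (n1 * x.2.2.1 + x.2.1.2 * m1 + x.2.1.2 * x.2.2.1) •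
      (X (x.1, m1 + x.2.1.1 + x.2.2.1, n1 + x.2.1.2 + x.2.2.2) *
        pderiv (x.1, x.2.1) (pderiv (i, x.2.2) p))
  have hF : F.HasFiniteSupport :=
    (hasFiniteSupport_pderiv_pderiv p).fun_comp_of_injective_of_map_zero
      (k := fun x : Idx l × (ℤ × ℤ) × (ℤ × ℤ) => ((x.1, x.2.1), (i, x.2.2)))
      (fun x y h => by simp_all [Prod.ext_iff])
      (F := fun x r => q ^ (n1 * x.2.2.1 + x.2.1.2 * m1 + x.2.1.2 * x.2.2.1) •
        (X (x.1, m1 + x.2.1.1 + x.2.2.1, n1 + x.2.1.2 + x.2.2.2) * r)) fun _ => by simp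
  let e : (ℤ × ℤ) × Idx l × (ℤ × ℤ) ≃ Idx l × (ℤ × ℤ) × (ℤ × ℤ) :=
    (Equiv.prodComm _ _).trans (Equiv.prodAssoc _ _ _)
  rw [eUp, eUpSecondOrder_apply, sub_right_inj]
  calc ∑ᶠ j, ∑ᶠ ab, F (j, ab) = ∑ᶠ y, F (e y) := by rw [← finsum_curry F hF, finsum_comp_equiv]
    _ = ∑ᶠ b, ∑ᶠ ja, F (e (b, ja)) :=
        finsum_curry (fun y => F (e y)) (hF.fun_comp_of_injective (g := e) e.injective)
    _ = _ := finsum_congr fun b => by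
      rw [derivation_eq_finsum_mul_pderiv (shiftDerivation l q _ _),
        smul_finsum' _ (hasFiniteSupport_mul_pderiv _ _)]
      refine finsum_congr fun ⟨j, a⟩ => ?_
      simp only [F, e, Equiv.trans_apply, Equiv.prodComm_apply, Prod.swap, Equiv.prodAssoc_apply,
        shiftDerivation_X, smul_mul_assoc, smul_smul, ← zpow_add₀ hq]
      rw [add_right_comm m1 a.1, add_right_comm n1 a.2]
      congr 2
      ring

theorem commutator_shiftDerivation_shiftDerivation_pderiv {q : ℂ} (hq : q ≠ 0)
    (P₁ P₂ R₁ R₂ : ℤ) (k : Idx l) (b : ℤ × ℤ) (p : V l) :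
    shiftDerivation l q R₁ R₂ (shiftDerivation l q P₁ P₂ (pderiv (k, b) p))
      - shiftDerivation l q P₁ P₂ (pderiv (k, b) (shiftDerivation l q R₁ R₂ p))
      = -((q ^ (R₂ * P₁) - q ^ (P₂ * R₁)) •
            shiftDerivation l q (P₁ + R₁) (P₂ + R₂) (pderiv (k, b) p))
        - q ^ ((b.2 - R₂) * R₁) •
            shiftDerivation l q P₁ P₂ (pderiv (k, b.1 - R₁, b.2 - R₂) p) := by
  have hpd := congr($(lie_pderiv_shiftDerivation q R₁ R₂ k b) p)
  have hE := congr($(lie_shiftDerivation_shiftDerivation hq P₁ P₂ R₁ R₂) (pderiv (k, b) p))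
  rw [Derivation.commutator_apply, Derivation.smul_apply] at hpd hE
  rw [eq_add_of_sub_eq' hpd, map_add, Derivation.map_smul]
  linear_combination (norm := module) -hE

theorem commutator_shiftDerivation_eUpSecondOrder {q : ℂ} (hq : q ≠ 0) (i : Idx l)
    (m1 n1 m2 n2 : ℤ) (p : V l) :
    shiftDerivation l q m2 n2 (eUpSecondOrder q i m1 n1 p)
      - eUpSecondOrder q i m1 n1 (shiftDerivation l q m2 n2 p)
      = -(q ^ (n2 * m1) • eUpSecondOrder q i (m1 + m2) (n1 + n2) p) := by
  have hfin : ∀ (c : ℤ × ℤ → ℂ) (D : ℤ × ℤ → Derivation ℂ (V l) (V l)) (r : V l),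
      (fun b => c b • D b (pderiv (i, b) r)).HasFiniteSupport := fun c D r =>
    hasFiniteSupport_smul_derivation_pderiv c D (Prod.mk_right_injective i) r
  set A : ℤ × ℤ → V l := fun b =>
    (q ^ (n1 * b.1) * (q ^ (n2 * (m1 + b.1)) - q ^ ((n1 + b.2) * m2))) •
      shiftDerivation l q (m1 + b.1 + m2) (n1 + b.2 + n2) (pderiv (i, b) p)
  set B : ℤ × ℤ → V l := fun b =>
    (q ^ (n1 * b.1) * q ^ ((b.2 - n2) * m2)) •
      shiftDerivation l q (m1 + b.1) (n1 + b.2) (pderiv (i, b.1 - m2, b.2 - n2) p)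
  have hB : B.HasFiniteSupport := hasFiniteSupport_smul_derivation_pderiv _ _
    (fun b b' h => by simp_all [Prod.ext_iff]) p
  have hshift : ∀ b : ℤ × ℤ, A b + B (b + (m2, n2))
      = q ^ (n2 * m1) • q ^ ((n1 + n2) * b.1) •
          shiftDerivation l q (m1 + m2 + b.1) (n1 + n2 + b.2) (pderiv (i, b) p) := by
    intro b
    simp only [A, B, Prod.fst_add, Prod.snd_add, add_sub_cancel_right]
    rw [show m1 + (b.1 + m2) = m1 + m2 + b.1 by ring, show n1 + (b.2 + n2) = n1 + n2 + b.2 by ring,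
      add_right_comm m1 b.1, add_right_comm n1 b.2, ← add_smul, smul_smul]
    congr 1
    simp only [mul_add, add_mul, zpow_add₀ hq]
    ring
  calc _ = ∑ᶠ b, (-A b - B b) := by
        rw [eUpSecondOrder_apply, eUpSecondOrder_apply, map_finsum _ (hfin _ _ p),
          ← finsum_sub_distrib ((hfin _ _ p).fun_comp (map_zero _)) (hfin _ _ _)]
        refine finsum_congr fun b => ?_
        rw [Derivation.map_smul, ← smul_sub, commutator_shiftDerivation_shiftDerivation_pderiv hq]
        module
    _ = -(∑ᶠ b, A b + ∑ᶠ b, B (b + (m2, n2))) := by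
        rw [finsum_sub_distrib (f := fun b => -A b) (hfin _ _ p).neg hB, finsum_neg_distrib,
          ← finsum_comp_equiv (Equiv.addRight (m2, n2)) (f := B), Equiv.coe_addRight]
        abel
    _ = _ := by
        rw [← finsum_add_distrib (hfin _ _ p) (hB.fun_comp_of_injective (add_left_injective _)),
          finsum_congr hshift, eUpSecondOrder_apply, smul_finsum' _ (hfin _ _ p)]

end

theorem stmt10_general (l : ℕ) (q μ : ℂ) (hq : q ≠ 0)
    (i : Idx l) (m1 n1 m2 n2 : ℤ) :
    oComm (eUp l q μ i m1 n1) (e11 l q μ m2 n2) = fun p =>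
      -(q ^ (n2 * m1) • eUp l q μ i (m1 + m2) (n1 + n2) p) := by
  funext p
  have hpd := congr($(lie_pderiv_shiftDerivation q m2 n2 i (-m1, -n1)) p)
  have hquad := commutator_shiftDerivation_eUpSecondOrder hq i m1 n1 m2 n2 p
  have hcoef : q ^ (-(m1 * n1)) * μ * q ^ ((-n1 - n2) * m2)
      = q ^ (n2 * m1) * (q ^ (-((m1 + m2) * (n1 + n2))) * μ) := by
    rw [mul_right_comm, ← zpow_add₀ hq, ← mul_assoc, ← zpow_add₀ hq]
    congr 2
    ring
  rw [Derivation.commutator_apply, Derivation.smul_apply] at hpd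
  simp only [oComm, e11_eq_smul_sub_shiftDerivation, eUp_eq_sub_eUpSecondOrder hq, map_sub,
    map_smul, Derivation.map_smul, neg_add'] at hpd ⊢
  linear_combination (norm := module) (-(q ^ (-(m1 * n1)) * μ)) • hpd - hquad
    - hcoef • pderiv (i, -m1 - m2, -n1 - n2) p

theorem stmt10 (l : ℕ) (hl : 2 ≤ l) (q μ : ℂ) (hq : q ≠ 0)
    (i : Idx l) (m1 n1 m2 n2 : ℤ) :
    oComm (eUp l q μ i m1 n1) (e11 l q μ m2 n2) = fun p =>
      -(q ^ (n2 * m1) • eUp l q μ i (m1 + m2) (n1 + n2) p) :=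
  stmt10_general l q μ hq i m1 n1 m2 n2
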